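/- Let J be an invertible antisymmetric 2k×2k matrix. On the open set of pairs (K,M) ∈ M_{d×2k} × Sym(R^d) with M invertible, the map J_h(K,M) := -½ J^{-1} K^T M^{-1} K is a momentum map for the right action (K,M) ↦ (Kg^{-1}, M) of Sp(R^{2k},J) with respect to the Poisson bracket {f,g}(K,M) = -Tr(M (∂f/∂K)^T J (∂g/∂K)); moreover it is equivariant: J_h(Kg^{-1},M) = g J_h(K,M) g^{-1} for all g ∈ Sp(R^{2k},J). -/

import Mathlib

open Matrix

attribute [local instance] Matrix.normedAddCommGroup Matrix.normedSpace

/-- The gradient `∂f/∂K ∈ M_{2k×d}` of a function of `K ∈ M_{d×2k}`, relative to the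
trace pairing `⟨∂f/∂K, δK⟩ = Tr((∂f/∂K) δK)`. -/
noncomputable def gradK {k d : ℕ} (f : Matrix (Fin d) (Fin (2 * k)) ℝ → ℝ)
    (K : Matrix (Fin d) (Fin (2 * k)) ℝ) : Matrix (Fin (2 * k)) (Fin d) ℝ :=
  Matrix.of fun a i => fderiv ℝ f K (Matrix.single i a 1)

/-- The (minus) Lie-Poisson bracket
`{f,g}(K,M) = -Tr(M (∂f/∂K)ᵀ J (∂g/∂K))` on the dual of the generalized Heisenberg
algebra. -/
noncomputable def heisPB {k d : ℕ} (J : Matrix (Fin (2 * k)) (Fin (2 * k)) ℝ)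
    (f g : Matrix (Fin d) (Fin (2 * k)) ℝ × Matrix (Fin d) (Fin d) ℝ → ℝ)
    (K : Matrix (Fin d) (Fin (2 * k)) ℝ) (M : Matrix (Fin d) (Fin d) ℝ) : ℝ :=
  -(M * (gradK (fun K' => f (K', M)) K)ᵀ * J * gradK (fun K' => g (K', M)) K).trace

/-- The untangling momentum map `J_h(K,M) = -½ J⁻¹ Kᵀ M⁻¹ K`. -/
noncomputable def JHmap {k d : ℕ} (J : Matrix (Fin (2 * k)) (Fin (2 * k)) ℝ)
    (p : Matrix (Fin d) (Fin (2 * k)) ℝ × Matrix (Fin d) (Fin d) ℝ) :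
    Matrix (Fin (2 * k)) (Fin (2 * k)) ℝ :=
  -((1 / 2 : ℝ) • (J⁻¹ * p.1ᵀ * p.2⁻¹ * p.1))

/-!
With `Q := S J⁻¹`, the condition `J S + Sᵀ J = 0` for antisymmetric invertible `J` says exactly
that `Q` is symmetric, and `⟨J_h, S⟩ = -½ Tr(Kᵀ M⁻¹ K Q)` is a quadratic form in `K` with
symmetric coefficients, so its gradient for the trace pairing is `-Q Kᵀ M⁻¹`. In the bracket,
`J S J⁻¹ = -Sᵀ` and cyclicity of the trace turn `-Tr(M Gᵀ J (-Q Kᵀ M⁻¹))` into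
`Tr(G (-K S)) = df·(-K S)`. Equivariance is the identity `J⁻¹ g⁻ᵀ = g J⁻¹`, obtained by
inverting `gᵀ J g = J`.
-/

namespace Matrix

theorem linearMap_apply_eq_trace_mul {R : Type*} [CommSemiring R] {m n : Type*} [Fintype m]
    [Fintype n] [DecidableEq m] [DecidableEq n] (L : Matrix m n R →ₗ[R] R) (δ : Matrix m n R) :
    L δ = (of (fun j i => L (single i j 1)) * δ).trace := by
  suffices L = traceLinearMap n R R ∘ₗ mulLeftLinearMap n R (of fun j i => L (single i j 1)) from
    congr($this δ)
  refine ext_linearMap R fun i j => LinearMap.ext fun c => ?_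
  have hc : single i j c = c • single i j (1 : R) := by rw [smul_single, smul_eq_mul, mul_one]
  simp only [LinearMap.comp_apply, singleLinearMap_apply, traceLinearMap_apply,
    mulLeftLinearMap_apply, trace_mul_single, of_apply, op_smul_eq_mul]
  rw [hc, map_smul, smul_eq_mul, mul_comm]

variable {m n : Type*} [Fintype m] [Fintype n]

theorem fderiv_trace_transpose_mul_mul_mul (P : Matrix m m ℝ) (Q : Matrix n n ℝ)
    (K δ : Matrix m n ℝ) :
    fderiv ℝ (fun X : Matrix m n ℝ => (Xᵀ * P * X * Q).trace) K δ =
      (Kᵀ * P * δ * Q).trace + (δᵀ * P * K * Q).trace :=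
  let B := (LinearMap.mk₂ ℝ (fun X Y : Matrix m n ℝ => (Xᵀ * P * Y * Q).trace)
      (by intros; simp [transpose_add, Matrix.add_mul])
      (by intros; simp [transpose_smul])
      (by intros; simp [Matrix.mul_add, Matrix.add_mul])
      (by intros; simp)).toContinuousBilinearMap
  congr($((B.hasFDerivAt_of_bilinear (hasFDerivAt_id K) (hasFDerivAt_id K)).fderiv) δ)

theorem fderiv_trace_transpose_mul_mul_mul_of_symm {P : Matrix m m ℝ} {Q : Matrix n n ℝ}
    (hP : Pᵀ = P) (hQ : Qᵀ = Q) (K δ : Matrix m n ℝ) :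
    fderiv ℝ (fun X : Matrix m n ℝ => (Xᵀ * P * X * Q).trace) K δ =
      ((2 : ℝ) • (Q * Kᵀ * P) * δ).trace := by
  rw [fderiv_trace_transpose_mul_mul_mul, smul_mul, trace_smul, two_smul,
    ← trace_transpose (δᵀ * P * K * Q), trace_mul_cycle]
  simp only [transpose_mul, transpose_transpose, hP, hQ, Matrix.mul_assoc]

section Symplectic

variable {R : Type*} [CommRing R] {n : Type*} [Fintype n] [DecidableEq n]

theorem mul_mul_inv_of_mem_symplecticLie {J S : Matrix n n R} (hJ : IsUnit J.det)
    (hS : J * S + Sᵀ * J = 0) : J * S * J⁻¹ = -Sᵀ := by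
  rw [eq_neg_of_add_eq_zero_left hS, Matrix.neg_mul, Matrix.mul_assoc, mul_nonsing_inv J hJ,
    Matrix.mul_one]

theorem transpose_mul_inv_of_mem_symplecticLie {J S : Matrix n n R} (hanti : Jᵀ = -J)
    (hJ : IsUnit J.det) (hS : J * S + Sᵀ * J = 0) : (S * J⁻¹)ᵀ = S * J⁻¹ := by
  have hJinvT : J⁻¹ᵀ = -J⁻¹ := by
    rw [transpose_nonsing_inv, hanti]
    refine inv_eq_left_inv ?_
    rw [neg_mul_neg, nonsing_inv_mul J hJ]
  rw [transpose_mul, hJinvT, ← neg_neg Sᵀ, ← mul_mul_inv_of_mem_symplecticLie hJ hS, neg_mul_neg,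
    ← Matrix.mul_assoc, ← Matrix.mul_assoc, nonsing_inv_mul J hJ, Matrix.one_mul]

theorem inv_mul_inv_transpose_of_mem_symplectic {J g : Matrix n n R} (hg : gᵀ * J * g = J)
    (hgu : IsUnit g.det) : J⁻¹ * g⁻¹ᵀ = g * J⁻¹ := by
  have hinv : J⁻¹ = g⁻¹ * J⁻¹ * gᵀ⁻¹ := by
    conv_lhs => rw [← hg]
    rw [mul_inv_rev, mul_inv_rev, Matrix.mul_assoc]
  conv_rhs => rw [hinv]
  rw [transpose_nonsing_inv, ← Matrix.mul_assoc, ← Matrix.mul_assoc, mul_nonsing_inv g hgu,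
    Matrix.one_mul]

end Symplectic

end Matrix

open Matrix

section

variable {k d : ℕ}

theorem fderiv_apply_eq_trace_gradK (f : Matrix (Fin d) (Fin (2 * k)) ℝ → ℝ)
    (K δ : Matrix (Fin d) (Fin (2 * k)) ℝ) :
    fderiv ℝ f K δ = (gradK f K * δ).trace :=
  linearMap_apply_eq_trace_mul (fderiv ℝ f K).toLinearMap δ

theorem gradK_eq_of_fderiv_apply_eq_trace {f : Matrix (Fin d) (Fin (2 * k)) ℝ → ℝ}
    {K : Matrix (Fin d) (Fin (2 * k)) ℝ} {G : Matrix (Fin (2 * k)) (Fin d) ℝ}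
    (h : ∀ δ, fderiv ℝ f K δ = (G * δ).trace) : gradK f K = G := by
  ext a i
  rw [gradK, of_apply, h, trace_mul_single, op_smul_eq_mul, mul_one]

theorem trace_JHmap_mul (J S : Matrix (Fin (2 * k)) (Fin (2 * k)) ℝ)
    (K : Matrix (Fin d) (Fin (2 * k)) ℝ) (M : Matrix (Fin d) (Fin d) ℝ) :
    (JHmap J (K, M) * S).trace = (Kᵀ * (-(1 / 2 : ℝ) • M⁻¹) * K * (S * J⁻¹)).trace := by
  rw [JHmap, ← Matrix.mul_assoc, trace_mul_comm _ J⁻¹]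
  simp only [Matrix.neg_mul, Matrix.mul_neg, smul_mul, Matrix.mul_smul, neg_smul,
    Matrix.mul_assoc]

theorem gradK_trace_JHmap_mul {J S : Matrix (Fin (2 * k)) (Fin (2 * k)) ℝ} (hanti : Jᵀ = -J)
    (hJ : IsUnit J.det) (hS : J * S + Sᵀ * J = 0) (K : Matrix (Fin d) (Fin (2 * k)) ℝ)
    {M : Matrix (Fin d) (Fin d) ℝ} (hM : Mᵀ = M) :
    gradK (fun K' => (JHmap J (K', M) * S).trace) K = -(S * J⁻¹ * Kᵀ * M⁻¹) := by
  have hP : (-(1 / 2 : ℝ) • M⁻¹)ᵀ = -(1 / 2 : ℝ) • M⁻¹ := by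
    rw [transpose_smul, transpose_nonsing_inv, hM]
  refine gradK_eq_of_fderiv_apply_eq_trace fun δ => ?_
  simp only [trace_JHmap_mul]
  rw [fderiv_trace_transpose_mul_mul_mul_of_symm hP
    (transpose_mul_inv_of_mem_symplecticLie hanti hJ hS), Matrix.mul_smul, smul_smul]
  norm_num

theorem heisPB_trace_JHmap_mul {J S : Matrix (Fin (2 * k)) (Fin (2 * k)) ℝ} (hanti : Jᵀ = -J)
    (hJ : IsUnit J.det) (hS : J * S + Sᵀ * J = 0)
    (f : Matrix (Fin d) (Fin (2 * k)) ℝ × Matrix (Fin d) (Fin d) ℝ → ℝ)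
    (K : Matrix (Fin d) (Fin (2 * k)) ℝ) {M : Matrix (Fin d) (Fin d) ℝ} (hM : Mᵀ = M)
    (hMu : IsUnit M.det) :
    heisPB J f (fun p => (JHmap J p * S).trace) K M =
      fderiv ℝ (fun K' => f (K', M)) K (-(K * S)) := by
  rw [heisPB, gradK_trace_JHmap_mul hanti hJ hS K hM, fderiv_apply_eq_trace_gradK]
  set G := gradK (fun K' => f (K', M)) K
  calc -(M * Gᵀ * J * -(S * J⁻¹ * Kᵀ * M⁻¹)).trace
      = (M⁻¹ * M * (Gᵀ * (J * S * J⁻¹) * Kᵀ)).trace := by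
        rw [Matrix.mul_assoc M⁻¹, trace_mul_comm M⁻¹]
        simp only [Matrix.mul_neg, trace_neg, neg_neg, Matrix.mul_assoc]
    _ = -((K * S * G)ᵀ).trace := by
        rw [nonsing_inv_mul M hMu, Matrix.one_mul, mul_mul_inv_of_mem_symplecticLie hJ hS]
        simp only [transpose_mul, Matrix.mul_neg, Matrix.neg_mul, trace_neg, Matrix.mul_assoc]
    _ = (G * -(K * S)).trace := by
        rw [trace_transpose, trace_mul_comm, Matrix.mul_neg, trace_neg]

theorem JHmap_mul_inv {J g : Matrix (Fin (2 * k)) (Fin (2 * k)) ℝ} (hg : gᵀ * J * g = J)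
    (hgu : IsUnit g.det) (K : Matrix (Fin d) (Fin (2 * k)) ℝ) (M : Matrix (Fin d) (Fin d) ℝ) :
    JHmap J (K * g⁻¹, M) = g * JHmap J (K, M) * g⁻¹ := by
  simp only [JHmap, transpose_mul, Matrix.mul_neg, Matrix.neg_mul, Matrix.mul_smul,
    Matrix.smul_mul, ← Matrix.mul_assoc, inv_mul_inv_transpose_of_mem_symplectic hg hgu]

end

/-- On the open set where `M` is invertible, `J_h(K,M) = -½ J⁻¹ Kᵀ M⁻¹ K` is a momentum
map for the action `(K,M) ↦ (Kg⁻¹, M)` of `Sp(ℝ^{2k},J)` with respect to the Poisson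
bracket `{f,g}(K,M) = -Tr(M (∂f/∂K)ᵀ J (∂g/∂K))`: for every differentiable `f`, every
`S ∈ sp(ℝ^{2k},J)` with infinitesimal generator `(K,M) ↦ (-KS,0)`, one has
`{f, ⟨J_h,S⟩} = df·(-KS)`; moreover `J_h` is equivariant:
`J_h(Kg⁻¹,M) = g J_h(K,M) g⁻¹`. -/
theorem untangling_momentum_map (k d : ℕ)
    (J : Matrix (Fin (2 * k)) (Fin (2 * k)) ℝ) (hanti : Jᵀ = -J)
    (hJ : IsUnit J.det) :
    (∀ f : Matrix (Fin d) (Fin (2 * k)) ℝ × Matrix (Fin d) (Fin d) ℝ → ℝ,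
      (∀ M, Differentiable ℝ (fun K => f (K, M))) →
      ∀ S : Matrix (Fin (2 * k)) (Fin (2 * k)) ℝ, J * S + Sᵀ * J = 0 →
      ∀ (K : Matrix (Fin d) (Fin (2 * k)) ℝ) (M : Matrix (Fin d) (Fin d) ℝ),
        Mᵀ = M → IsUnit M.det →
        heisPB J f (fun p => (JHmap J p * S).trace) K M =
          fderiv ℝ (fun K' => f (K', M)) K (-(K * S))) ∧
    (∀ g : Matrix (Fin (2 * k)) (Fin (2 * k)) ℝ, gᵀ * J * g = J → IsUnit g.det →
      ∀ (K : Matrix (Fin d) (Fin (2 * k)) ℝ) (M : Matrix (Fin d) (Fin d) ℝ),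
        Mᵀ = M → IsUnit M.det →
        JHmap J (K * g⁻¹, M) = g * JHmap J (K, M) * g⁻¹) :=
  ⟨fun f _ _ hS K _ hM hMu => heisPB_trace_JHmap_mul hanti hJ hS f K hM hMu,
    fun _ hg hgu K M _ _ => JHmap_mul_inv hg hgu K M⟩
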